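/- Let α > 0, let μ : ℝ → ℝ be continuous and nonnegative, let b₁ > 0 be a constant, and let φ : [0,∞) → ℝ be positive and bounded on (0,α]. Let n be the explicit characteristic solution of the McKendrick equation with boundary condition n(0,t) = b₁·n(α,t) and initial data φ. If log b₁ = ∫₀^α μ(s) ds, then for every fixed a ≥ 0 the map t ↦ n(a,t) is periodic with period α on [a,∞): n(a, t + α) = n(a,t) for all t ≥ a. -/
import Mathlib


open MeasureTheory Real Set Filter

/-- Theorem 2.5 a: if `log b₁ = ∫₀^α μ(s) ds` (Lotka growth rate
`r = 1`), then the characteristic solution of the McKendrick equation with one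
reproductive age class at age `α` is, for every fixed `a`, periodic in time
with period `α` on `[a,∞)`. -/
theorem mckendrick_one_age_class_periodic_when_critical
    (α : ℝ) (hα : 0 < α)
    (μ : ℝ → ℝ) (hμc : Continuous μ) (hμ0 : ∀ x, 0 ≤ μ x)
    (b₁ : ℝ) (hb₁ : 0 < b₁)
    (φ : ℝ → ℝ)
    (hφpos : ∀ a ∈ Set.Ioc (0:ℝ) α, 0 < φ a)
    (hφbd : ∃ M : ℝ, ∀ a ∈ Set.Ioc (0:ℝ) α, φ a ≤ M)
    (n : ℝ → ℝ → ℝ)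
    (hn₁ : ∀ a t : ℝ, 0 ≤ t → t < a →
      n a t = φ (a - t) * Real.exp (-(∫ s in (0:ℝ)..t, μ (s + a - t))))
    (hn₂ : ∀ a t : ℝ, 0 ≤ a → a ≤ t →
      ∀ m : ℕ, (m : ℤ) = ⌊(t - a) / α⌋ + 1 →
      n a t = b₁ ^ m * φ ((m : ℝ) * α + a - t) *
        Real.exp (-(∫ s in (0:ℝ)..(t - a - ((m : ℝ) - 1) * α),
          μ (s + (m : ℝ) * α + a - t))) *
        Real.exp (-(((m : ℝ) - 1) * ∫ s in (0:ℝ)..α, μ s)) *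
        Real.exp (-(∫ s in (0:ℝ)..a, μ s)))
    (hcrit : Real.log b₁ = ∫ s in (0:ℝ)..α, μ s) :
    ∀ a : ℝ, 0 ≤ a → ∀ t : ℝ, a ≤ t → n a (t + α) = n a t := by
  intro a ha t ht
  set k : ℤ := ⌊(t - a) / α⌋ with hk
  have hk0 : 0 ≤ k := Int.floor_nonneg.2 (div_nonneg (by linarith) hα.le)
  obtain ⟨m, hm⟩ : ∃ m : ℕ, (m : ℤ) = k + 1 :=
    ⟨(k + 1).toNat, Int.toNat_of_nonneg (by linarith)⟩
  have hfloor' : ⌊(t + α - a) / α⌋ = k + 1 := by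
    have h : (t + α - a) / α = (t - a) / α + 1 := by field_simp; ring
    rw [h, Int.floor_add_one, hk]
  have h1 := hn₂ a t ha ht m hm
  have h2 := hn₂ a (t + α) ha (by linarith) (m + 1) (by
    rw [hfloor']; push_cast; omega)
  have e1 : ((m + 1 : ℕ) : ℝ) * α + a - (t + α) = (m : ℝ) * α + a - t := by
    push_cast; ring
  have e2 : t + α - a - (((m + 1 : ℕ) : ℝ) - 1) * α = t - a - ((m : ℝ) - 1) * α := by
    push_cast; ring
  have e3 : ∀ s : ℝ, s + ((m + 1 : ℕ) : ℝ) * α + a - (t + α) = s + (m : ℝ) * α + a - t := by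
    intro s; push_cast; ring
  have e4 : (((m + 1 : ℕ) : ℝ) - 1) * (∫ s in (0:ℝ)..α, μ s)
      = ((m : ℝ) - 1) * (∫ s in (0:ℝ)..α, μ s) + (∫ s in (0:ℝ)..α, μ s) := by
    push_cast; ring
  have hbe : b₁ * Real.exp (-(∫ s in (0:ℝ)..α, μ s)) = 1 := by
    rw [← hcrit, Real.exp_neg, Real.exp_log hb₁, mul_inv_cancel₀ hb₁.ne']
  rw [h1, h2, e1, e2, e4]
  simp only [e3]
  rw [pow_succ]
  rw [neg_add, Real.exp_add]
  calc b₁ ^ m * b₁ * φ ((m:ℝ) * α + a - t) *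
        Real.exp (-(∫ s in (0:ℝ)..(t - a - ((m:ℝ) - 1) * α), μ (s + (m:ℝ) * α + a - t))) *
        (Real.exp (-(((m:ℝ) - 1) * ∫ s in (0:ℝ)..α, μ s)) *
          Real.exp (-(∫ s in (0:ℝ)..α, μ s))) *
        Real.exp (-(∫ s in (0:ℝ)..a, μ s))
      = (b₁ * Real.exp (-(∫ s in (0:ℝ)..α, μ s))) *
        (b₁ ^ m * φ ((m:ℝ) * α + a - t) *
        Real.exp (-(∫ s in (0:ℝ)..(t - a - ((m:ℝ) - 1) * α), μ (s + (m:ℝ) * α + a - t))) *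
        Real.exp (-(((m:ℝ) - 1) * ∫ s in (0:ℝ)..α, μ s)) *
        Real.exp (-(∫ s in (0:ℝ)..a, μ s))) := by ring
    _ = _ := by rw [hbe, one_mul]
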